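/- Write vectors in R^5 as (a; b_1, b_2, b_3, b_4). Let S ⊂ R^5 consist of the vectors (0; e_i) for i = 1,…,4 (where e_i is the i-th standard basis vector of R^4) and the vectors (1; −e_i − e_j) for all 1 ≤ i < j ≤ 4. Then the vector (3; −2,−2,−2,−1) does not belong to the convex cone generated by S. -/

import Mathlib

open scoped NNReal

/-- Divisor classes `aH + Σ bᵢ Eᵢ` on the blowup of P^5 along 4 general lines,
written as vectors `(a; b₁, b₂, b₃, b₄)`. -/
abbrev DivVec : Type := ℝ × (Fin 4 → ℝ)

/-- The classes of linear divisors: the exceptional divisors `(0; eᵢ)` and the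
hyperplanes containing two of the lines `(1; −eᵢ − eⱼ)` for `i < j`. -/
def linDivisors : Set DivVec :=
  {w | (∃ i : Fin 4, w = ((0 : ℝ), fun x => if x = i then (1 : ℝ) else 0)) ∨
    (∃ i j : Fin 4, i < j ∧
      w = ((1 : ℝ), fun x => if x = i ∨ x = j then (-1 : ℝ) else 0))}

/-! The linear form `φ(a; b) = 4a + 2b₁ + 2b₂ + 2b₃ + b₄` separates the cubic class from the
cone: it takes the values `2, 2, 2, 1` on the `Eᵢ` and `4 − φ(Eᵢ) − φ(Eⱼ) ≥ 0` on the
hyperplane classes, hence is nonnegative on the whole cone, but equals `12 − 12 − 1 = −1` on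
`(3; −2, −2, −2, −1)`. -/

theorem LinearMap.nonneg_of_mem_span_nnreal {E : Type*} [AddCommGroup E] [Module ℝ E]
    (f : E →ₗ[ℝ] ℝ) {s : Set E} (hs : ∀ x ∈ s, 0 ≤ f x) {x : E}
    (hx : x ∈ Submodule.span ℝ≥0 s) : 0 ≤ f x := by
  induction hx using Submodule.span_induction with
  | mem x hx => exact hs x hx
  | zero => simp
  | add x y _ _ hx hy => rw [map_add]; exact add_nonneg hx hy
  | smul c x _ hx => rw [NNReal.smul_def, map_smul, smul_eq_mul]; exact mul_nonneg c.2 hx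

def separatingFunctional : DivVec →ₗ[ℝ] ℝ where
  toFun w := 4 * w.1 + 2 * w.2 0 + 2 * w.2 1 + 2 * w.2 2 + w.2 3
  map_add' _ _ := by simp only [Prod.fst_add, Prod.snd_add, Pi.add_apply]; ring
  map_smul' _ _ := by
    simp only [Prod.smul_fst, Prod.smul_snd, Pi.smul_apply, smul_eq_mul, RingHom.id_apply]; ring

theorem separatingFunctional_nonneg {w : DivVec} (hw : w ∈ linDivisors) :
    0 ≤ separatingFunctional w := by
  rcases hw with ⟨i, rfl⟩ | ⟨i, j, hij, rfl⟩
  · fin_cases i <;> norm_num +decide [separatingFunctional]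
  · fin_cases i <;> fin_cases j <;> revert hij <;> norm_num +decide [separatingFunctional]

theorem separatingFunctional_apply_cubic :
    separatingFunctional ((3 : ℝ), ![-2,-2,-2,-1]) = -1 := by
  norm_num [separatingFunctional, Matrix.cons_val_two, Matrix.cons_val_three]

/-- The class `3H − 2E₁ − 2E₂ − 2E₃ − E₄` of a cubic fourfold double along three of
the lines and containing the fourth is not in the convex cone generated by the
linear divisor classes: the cone of effective divisors on the blowup of P^5 along
4 general lines is not linearly generated. -/
theorem stmt16 :
    ((3 : ℝ), ![-2,-2,-2,-1]) ∉ Submodule.span ℝ≥0 linDivisors := fun h => by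
  have := separatingFunctional.nonneg_of_mem_span_nnreal (fun _ => separatingFunctional_nonneg) h
  rw [separatingFunctional_apply_cubic] at this
  norm_num at this
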